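/- No benefit with binary actions: If the action set A has exactly two elements, then for every obedient ambiguous experiment (σ, μ) one has U_s(σ, μ, τ*) ≤ u_s^BP; that is, the sender cannot benefit from ambiguous communication. -/

import Mathlib

open Finset

/-- A stochastic kernel from `X` to `Y`: each row `k x` is a probability vector on `Y`.
An experiment is a kernel from states `Ω` to messages; a receiver strategy is a kernel
from messages to actions `A`. -/
def IsKernel {X Y : Type*} [Fintype Y] (k : X → Y → ℝ) : Prop :=
  (∀ x y, 0 ≤ k x y) ∧ ∀ x, ∑ y, k x y = 1

/-- A probability vector on a finite type. -/
def IsProb {Θ : Type*} [Fintype Θ] (μ : Θ → ℝ) : Prop :=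
  (∀ θ, 0 ≤ μ θ) ∧ ∑ θ, μ θ = 1

/-- The obedient strategy `τ*`: take the recommended action with probability one. -/
noncomputable def tauStar {A : Type*} [DecidableEq A] : A → A → ℝ :=
  fun m a => if a = m then (1 : ℝ) else 0

/-- Expected payoff `u_i(σ, τ) = ∑_{ω,m,a} p(ω) σ(m|ω) τ(a|m) u_i(a,ω)`. -/
noncomputable def expPayoff {Ω M A : Type*} [Fintype Ω] [Fintype M] [Fintype A]
    (p : Ω → ℝ) (u : A → Ω → ℝ) (σ : Ω → M → ℝ) (τ : M → A → ℝ) : ℝ :=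
  ∑ ω, ∑ m, ∑ a, p ω * σ ω m * τ m a * u a ω

/-- Obedience of a single (unambiguous) canonical experiment: `τ*` is a best reply. -/
def Obedient {Ω A : Type*} [Fintype Ω] [Fintype A] [DecidableEq A]
    (p : Ω → ℝ) (ur : A → Ω → ℝ) (σ : Ω → A → ℝ) : Prop :=
  ∀ τ : A → A → ℝ, IsKernel τ → expPayoff p ur σ τ ≤ expPayoff p ur σ tauStar

/-- Obedience of an ambiguous experiment `(σ, μ)` for a smooth-ambiguity receiver with
index `φr`:  `τ*` maximizes `τ ↦ U_r(σ, μ, τ) = φr⁻¹(∑_θ μ_θ φr(u_r(σ_θ, τ)))`; since `φr`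
is strictly increasing this is equivalent to `τ*` maximizing `τ ↦ ∑_θ μ_θ φr(u_r(σ_θ, τ))`. -/
def AmbObedient {Ω A Θ : Type*} [Fintype Ω] [Fintype A] [DecidableEq A] [Fintype Θ]
    (φr : ℝ → ℝ) (p : Ω → ℝ) (ur : A → Ω → ℝ) (σ : Θ → Ω → A → ℝ) (μ : Θ → ℝ) : Prop :=
  ∀ τ : A → A → ℝ, IsKernel τ →
    ∑ θ, μ θ * φr (expPayoff p ur (σ θ) τ) ≤ ∑ θ, μ θ * φr (expPayoff p ur (σ θ) tauStar)

/-- A smooth ambiguity index: strictly increasing, concave, differentiable. -/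
def SmoothIndex (φ : ℝ → ℝ) : Prop :=
  StrictMono φ ∧ ConcaveOn ℝ Set.univ φ ∧ Differentiable ℝ φ

/-- Two experiments are (strictly) Pareto ranked: under obedience, sender and receiver
strictly rank them the same way. -/
def ParetoRanked {Ω A : Type*} [Fintype Ω] [Fintype A] [DecidableEq A]
    (p : Ω → ℝ) (us ur : A → Ω → ℝ) (σ σ' : Ω → A → ℝ) : Prop :=
  (expPayoff p us σ' tauStar < expPayoff p us σ tauStar ∧
      expPayoff p ur σ' tauStar < expPayoff p ur σ tauStar) ∨
  (expPayoff p us σ tauStar < expPayoff p us σ' tauStar ∧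
      expPayoff p ur σ tauStar < expPayoff p ur σ' tauStar)

/-- Two experiments are weakly Pareto ranked. -/
def WeaklyParetoRanked {Ω A : Type*} [Fintype Ω] [Fintype A] [DecidableEq A]
    (p : Ω → ℝ) (us ur : A → Ω → ℝ) (σ σ' : Ω → A → ℝ) : Prop :=
  (expPayoff p us σ' tauStar ≤ expPayoff p us σ tauStar ∧
      expPayoff p ur σ' tauStar ≤ expPayoff p ur σ tauStar) ∨
  (expPayoff p us σ tauStar ≤ expPayoff p us σ' tauStar ∧
      expPayoff p ur σ tauStar ≤ expPayoff p ur σ' tauStar)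

/-- Pointwise convex combination of two experiments. -/
noncomputable def mixExp {Ω A : Type*} (lam : ℝ) (σ1 σ2 : Ω → A → ℝ) : Ω → A → ℝ :=
  fun ω a => lam * σ1 ω a + (1 - lam) * σ2 ω a

/-- `(σbar, σlo, lam)` is a Pareto-ranked splitting of the experiment `σ`. -/
def ParetoRankedSplitting {Ω A : Type*} [Fintype Ω] [Fintype A] [DecidableEq A]
    (p : Ω → ℝ) (us ur : A → Ω → ℝ) (σbar σlo : Ω → A → ℝ) (lam : ℝ) (σ : Ω → A → ℝ) : Prop :=
  IsKernel σbar ∧ IsKernel σlo ∧ lam ∈ Set.Ioo (0 : ℝ) 1 ∧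
    mixExp lam σbar σlo = σ ∧ ParetoRanked p us ur σbar σlo

/-- The `((σbar, σlo), lam)`-probability premium of a player with utility `u` and index `φ`. -/
noncomputable def probPremium {Ω A : Type*} [Fintype Ω] [Fintype A] [DecidableEq A]
    (p : Ω → ℝ) (u : A → Ω → ℝ) (φ : ℝ → ℝ) (σbar σlo : Ω → A → ℝ) (lam : ℝ) : ℝ :=
  (φ (expPayoff p u (mixExp lam σbar σlo) tauStar) -
      lam * φ (expPayoff p u σbar tauStar) - (1 - lam) * φ (expPayoff p u σlo tauStar)) /
    (φ (expPayoff p u σbar tauStar) - φ (expPayoff p u σlo tauStar))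

/-- The set of `φs`-transformed sender values attainable by obedient ambiguous experiments;
the value of the sender's problem `(P)` equals `u` iff `φs u` is the least upper bound of
this set (since `φs` is continuous and strictly increasing). -/
def senderValues {Ω A : Type*} [Fintype Ω] [Fintype A] [DecidableEq A]
    (φs φr : ℝ → ℝ) (p : Ω → ℝ) (us ur : A → Ω → ℝ) : Set ℝ :=
  {x | ∃ (n : ℕ) (σ : Fin n → Ω → A → ℝ) (μ : Fin n → ℝ),
    (∀ j, IsKernel (σ j)) ∧ IsProb μ ∧ AmbObedient φr p ur σ μ ∧
    x = ∑ j, μ j * φs (expPayoff p us (σ j) tauStar)}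

/-- The set of feasible values of the auxiliary program `(Φ*(u))`: sums
`∑_θ λ_θ Φ_u(σ_θ)` over splittings `(λ_θ, σ_θ)` of obedient experiments, where
`Φ_u(σ) = (φs(u_s(σ,τ*)) − φs(u)) / φr'(u_r(σ,τ*))`. -/
def phiProgram {Ω A : Type*} [Fintype Ω] [Fintype A] [DecidableEq A]
    (φs φr : ℝ → ℝ) (p : Ω → ℝ) (us ur : A → Ω → ℝ) (u : ℝ) : Set ℝ :=
  {x | ∃ (n : ℕ) (σ : Fin n → Ω → A → ℝ) (lam : Fin n → ℝ),
    (∀ j, IsKernel (σ j)) ∧ IsProb lam ∧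
    Obedient p ur (fun ω a => ∑ j, lam j * σ j ω a) ∧
    x = ∑ j, lam j * ((φs (expPayoff p us (σ j) tauStar) - φs u) /
      deriv φr (expPayoff p ur (σ j) tauStar))}

/-!
Average the experiments: `σ̄ = ∑_θ μ_θ σ_θ`. By Jensen's inequality for the concave `φs`, the
sender's ambiguous payoff is at most `φs (u_s(σ̄, τ*))`, so it suffices that `σ̄` is obedient.
Ambiguous obedience against moving towards "always play `a`" gives the first-order condition
`∑_θ μ_θ φr'(v_θ) (K_a - v_θ) ≤ 0`, where `v_θ = u_r(σ_θ, τ*)` and `K_a` is the uninformed payoff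
of `a`. The tangent-line inequality and Jensen for `φr` turn it into `φr K_a ≤ φr (∑_θ μ_θ v_θ)`,
i.e. `u_r(σ̄, τ*) ≥ K_a`. With only two actions, beating both constant strategies is already
obedience.
-/

open Set

section Payoff

variable {Ω M A : Type*} [Fintype Ω] [Fintype M] [Fintype A]

def msgPayoff (p : Ω → ℝ) (u : A → Ω → ℝ) (σ : Ω → M → ℝ) (m : M) (a : A) : ℝ :=
  ∑ ω, p ω * σ ω m * u a ω

lemma expPayoff_eq_sum_msgPayoff (p : Ω → ℝ) (u : A → Ω → ℝ) (σ : Ω → M → ℝ)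
    (τ : M → A → ℝ) : expPayoff p u σ τ = ∑ m, ∑ a, τ m a * msgPayoff p u σ m a := by
  simp only [expPayoff, msgPayoff, mul_sum]
  rw [Finset.sum_comm]
  refine sum_congr rfl fun m _ => ?_
  rw [Finset.sum_comm]
  exact sum_congr rfl fun a _ => sum_congr rfl fun ω _ => by ring

lemma expPayoff_mixExp (p : Ω → ℝ) (u : A → Ω → ℝ) (σ : Ω → M → ℝ) (t : ℝ)
    (τ τ' : M → A → ℝ) :
    expPayoff p u σ (mixExp t τ τ') = t * expPayoff p u σ τ + (1 - t) * expPayoff p u σ τ' := by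
  simp only [expPayoff_eq_sum_msgPayoff, mixExp, add_mul, sum_add_distrib, mul_sum, mul_assoc]

lemma expPayoff_weightedSum {Θ : Type*} [Fintype Θ] (p : Ω → ℝ) (u : A → Ω → ℝ)
    (μ : Θ → ℝ) (σ : Θ → Ω → M → ℝ) (τ : M → A → ℝ) :
    expPayoff p u (fun ω m => ∑ θ, μ θ * σ θ ω m) τ = ∑ θ, μ θ * expPayoff p u (σ θ) τ := by
  simp only [expPayoff, mul_sum, sum_mul]
  conv_rhs => rw [Finset.sum_comm]
  refine sum_congr rfl fun ω _ => ?_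
  conv_rhs => rw [Finset.sum_comm]
  refine sum_congr rfl fun m _ => ?_
  conv_rhs => rw [Finset.sum_comm]
  exact sum_congr rfl fun a _ => sum_congr rfl fun θ _ => by ring

lemma expPayoff_tauStar [DecidableEq A] (p : Ω → ℝ) (u : A → Ω → ℝ) (σ : Ω → A → ℝ) :
    expPayoff p u σ tauStar = ∑ a, msgPayoff p u σ a a := by
  simp [expPayoff_eq_sum_msgPayoff, tauStar]

end Payoff

def constStrategy {M A : Type*} [DecidableEq A] (a : A) : M → A → ℝ :=
  fun _ b => if b = a then 1 else 0

lemma isKernel_constStrategy {M A : Type*} [Fintype A] [DecidableEq A] (a : A) :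
    IsKernel (constStrategy (M := M) a) :=
  ⟨fun _ b => by unfold constStrategy; split_ifs <;> norm_num, fun _ => by simp [constStrategy]⟩

lemma expPayoff_constStrategy {Ω M A : Type*} [Fintype Ω] [Fintype M] [Fintype A]
    [DecidableEq A] (p : Ω → ℝ) (u : A → Ω → ℝ) (σ : Ω → M → ℝ) (a : A) :
    expPayoff p u σ (constStrategy a) = ∑ m, msgPayoff p u σ m a := by
  simp [expPayoff_eq_sum_msgPayoff, constStrategy]

lemma expPayoff_constStrategy_of_isKernel {Ω M A : Type*} [Fintype Ω] [Fintype M] [Fintype A]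
    [DecidableEq A] (p : Ω → ℝ) (u : A → Ω → ℝ) {σ : Ω → M → ℝ} (hσ : IsKernel σ) (a : A) :
    expPayoff p u σ (constStrategy a) = ∑ ω, p ω * u a ω := by
  simp only [expPayoff_constStrategy, msgPayoff]
  rw [Finset.sum_comm]
  refine sum_congr rfl fun ω _ => ?_
  rw [← sum_mul, ← mul_sum, hσ.2 ω, mul_one]

lemma isKernel_mixExp {X Y : Type*} [Fintype Y] {k k' : X → Y → ℝ} (hk : IsKernel k)
    (hk' : IsKernel k') {t : ℝ} (ht : t ∈ Icc (0 : ℝ) 1) : IsKernel (mixExp t k k') := by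
  refine ⟨fun x y => ?_, fun x => ?_⟩
  · have := hk.1 x y; have := hk'.1 x y; unfold mixExp; nlinarith [ht.1, ht.2]
  · simp only [mixExp, sum_add_distrib, ← mul_sum, hk.2 x, hk'.2 x]; ring

lemma isKernel_weightedSum {X Y Θ : Type*} [Fintype Y] [Fintype Θ] {μ : Θ → ℝ} (hμ : IsProb μ)
    {k : Θ → X → Y → ℝ} (hk : ∀ θ, IsKernel (k θ)) : IsKernel fun x y => ∑ θ, μ θ * k θ x y := by
  refine ⟨fun x y => sum_nonneg fun θ _ => mul_nonneg (hμ.1 θ) ((hk θ).1 x y), fun x => ?_⟩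
  rw [Finset.sum_comm]
  simp only [← mul_sum, (hk _).2 x, mul_one, hμ.2]

lemma isKernel_tauStar {A : Type*} [Fintype A] [DecidableEq A] : IsKernel (tauStar (A := A)) :=
  ⟨fun _ b => by unfold tauStar; split_ifs <;> norm_num, fun _ => by simp [tauStar]⟩

lemma obedient_of_msgPayoff_le {Ω A : Type*} [Fintype Ω] [Fintype A] [DecidableEq A]
    {p : Ω → ℝ} {ur : A → Ω → ℝ} {σ : Ω → A → ℝ}
    (h : ∀ m a, msgPayoff p ur σ m a ≤ msgPayoff p ur σ m m) : Obedient p ur σ := by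
  intro τ hτ
  rw [expPayoff_eq_sum_msgPayoff, expPayoff_tauStar]
  refine sum_le_sum fun m _ => ?_
  calc ∑ a, τ m a * msgPayoff p ur σ m a ≤ ∑ a, τ m a * msgPayoff p ur σ m m :=
        sum_le_sum fun a _ => mul_le_mul_of_nonneg_left (h m a) (hτ.1 m a)
    _ = msgPayoff p ur σ m m := by rw [← sum_mul, hτ.2 m, one_mul]

/-- After message `m` the only alternative is the other action `a`, and the gain from it equals the
gain from always playing `a`. -/
lemma obedient_of_card_eq_two {Ω A : Type*} [Fintype Ω] [Fintype A] [DecidableEq A]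
    (hA : Fintype.card A = 2) {p : Ω → ℝ} {ur : A → Ω → ℝ} {σ : Ω → A → ℝ}
    (h : ∀ a, expPayoff p ur σ (constStrategy a) ≤ expPayoff p ur σ tauStar) :
    Obedient p ur σ := by
  refine obedient_of_msgPayoff_le fun m a => ?_
  obtain rfl | hne := eq_or_ne a m
  · exact le_rfl
  have huniv : (univ : Finset A) = {a, m} :=
    (eq_univ_of_card _ (by rw [card_pair hne, hA])).symm
  have := h a
  rw [expPayoff_constStrategy, expPayoff_tauStar, huniv, sum_pair hne, sum_pair hne] at this
  linarith

lemma HasDerivAt.nonpos_of_isMaxOn_Icc {F : ℝ → ℝ} {L a b : ℝ} (hab : a < b)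
    (hF : HasDerivAt F L a) (hmax : IsMaxOn F (Icc a b) a) : L ≤ 0 := by
  have hcone : b - a ∈ posTangentConeAt (Icc a b) a :=
    mem_posTangentConeAt_of_segment_subset (by rw [add_sub_cancel, segment_eq_Icc hab.le])
  have := hmax.localize.hasFDerivWithinAt_nonpos
    (hasDerivAt_iff_hasFDerivAt.1 hF).hasFDerivWithinAt hcone
  rw [ContinuousLinearMap.toSpanSingleton_apply, smul_eq_mul] at this
  nlinarith

lemma ConcaveOn.le_add_deriv_mul {φ : ℝ → ℝ} (hφ : ConcaveOn ℝ univ φ) {x : ℝ}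
    (hx : DifferentiableAt ℝ φ x) (y : ℝ) : φ y ≤ φ x + deriv φ x * (y - x) := by
  rcases lt_trichotomy y x with hyx | rfl | hxy
  · have := hφ.deriv_le_slope (mem_univ y) (mem_univ x) hyx hx
    rw [slope_def_field, le_div_iff₀ (sub_pos.2 hyx)] at this
    linarith
  · simp
  · have := hφ.slope_le_deriv (mem_univ x) (mem_univ y) hxy hx
    rw [slope_def_field, div_le_iff₀ (sub_pos.2 hxy)] at this
    linarith

lemma ConcaveOn.sum_mul_le_map {Θ : Type*} [Fintype Θ] {φ : ℝ → ℝ} (hφ : ConcaveOn ℝ univ φ)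
    {μ : Θ → ℝ} (hμ : IsProb μ) (x : Θ → ℝ) : ∑ θ, μ θ * φ (x θ) ≤ φ (∑ θ, μ θ * x θ) := by
  simpa only [smul_eq_mul] using
    hφ.le_map_sum (fun θ _ => hμ.1 θ) hμ.2 fun θ _ => mem_univ (x θ)

lemma SmoothIndex.le_sum_mul_of_sum_deriv_mul_nonpos {Θ : Type*} [Fintype Θ] {φ : ℝ → ℝ}
    (hφ : SmoothIndex φ) {μ : Θ → ℝ} (hμ : IsProb μ) {v : Θ → ℝ} {c : ℝ}
    (h : ∑ θ, μ θ * (deriv φ (v θ) * (c - v θ)) ≤ 0) : c ≤ ∑ θ, μ θ * v θ := by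
  refine hφ.1.le_iff_le.1 ?_
  calc φ c = ∑ θ, μ θ * φ c := by rw [← sum_mul, hμ.2, one_mul]
    _ ≤ ∑ θ, μ θ * (φ (v θ) + deriv φ (v θ) * (c - v θ)) :=
        sum_le_sum fun θ _ =>
          mul_le_mul_of_nonneg_left (hφ.2.1.le_add_deriv_mul (hφ.2.2 _) c) (hμ.1 θ)
    _ = ∑ θ, μ θ * φ (v θ) + ∑ θ, μ θ * (deriv φ (v θ) * (c - v θ)) := by
        simp only [mul_add, sum_add_distrib]
    _ ≤ ∑ θ, μ θ * φ (v θ) := by linarith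
    _ ≤ φ (∑ θ, μ θ * v θ) := hφ.2.1.sum_mul_le_map hμ v

section AmbObedient

variable {Ω A Θ : Type*} [Fintype Ω] [Fintype A] [DecidableEq A] [Fintype Θ]
  {φr : ℝ → ℝ} {p : Ω → ℝ} {ur : A → Ω → ℝ} {σ : Θ → Ω → A → ℝ} {μ : Θ → ℝ}

lemma AmbObedient.sum_deriv_mul_sub_nonpos (hobed : AmbObedient φr p ur σ μ)
    (hφr : Differentiable ℝ φr) {τ : A → A → ℝ} (hτ : IsKernel τ) :
    ∑ θ, μ θ * (deriv φr (expPayoff p ur (σ θ) tauStar) *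
      (expPayoff p ur (σ θ) τ - expPayoff p ur (σ θ) tauStar)) ≤ 0 := by
  set v := fun θ => expPayoff p ur (σ θ) tauStar
  set w := fun θ => expPayoff p ur (σ θ) τ
  set F : ℝ → ℝ := fun t => ∑ θ, μ θ * φr (v θ + t * (w θ - v θ))
  have hF : HasDerivAt F (∑ θ, μ θ * (deriv φr (v θ) * (w θ - v θ))) 0 := by
    refine HasDerivAt.fun_sum fun θ _ => HasDerivAt.const_mul _ ?_
    have hpath := ((hasDerivAt_id (0 : ℝ)).mul_const (w θ - v θ)).const_add (v θ)
    have := (hφr _).hasDerivAt.comp (0 : ℝ) hpath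
    simp only [id, zero_mul, add_zero, one_mul, Function.comp_def] at this
    exact this
  refine hF.nonpos_of_isMaxOn_Icc zero_lt_one fun t ht => ?_
  have hpay : ∀ θ, expPayoff p ur (σ θ) (mixExp t τ tauStar) = v θ + t * (w θ - v θ) :=
    fun θ => by rw [expPayoff_mixExp]; ring
  simpa [F, hpay] using hobed _ (isKernel_mixExp hτ isKernel_tauStar ht)

lemma AmbObedient.le_sum_mul_of_forall_eq (hobed : AmbObedient φr p ur σ μ)
    (hφr : SmoothIndex φr) (hμ : IsProb μ) {τ : A → A → ℝ} (hτ : IsKernel τ) {c : ℝ}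
    (hc : ∀ θ, expPayoff p ur (σ θ) τ = c) :
    c ≤ ∑ θ, μ θ * expPayoff p ur (σ θ) tauStar :=
  hφr.le_sum_mul_of_sum_deriv_mul_nonpos hμ
    (by simpa only [hc] using hobed.sum_deriv_mul_sub_nonpos hφr.2.2 hτ)

end AmbObedient

theorem no_benefit_with_binary_actions_general
    {Ω A : Type*} [Fintype Ω] [Fintype A] [DecidableEq A]
    (hA : Fintype.card A = 2)
    (p : Ω → ℝ) (us ur : A → Ω → ℝ)
    (φs φr : ℝ → ℝ) (hφs : SmoothIndex φs) (hφr : SmoothIndex φr)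
    (usBP : ℝ)
    (husBP : IsGreatest {x : ℝ | ∃ σ0 : Ω → A → ℝ,
      IsKernel σ0 ∧ Obedient p ur σ0 ∧ x = expPayoff p us σ0 tauStar} usBP)
    (Θ : Type*) [Fintype Θ]
    (σ : Θ → Ω → A → ℝ) (hσ : ∀ θ, IsKernel (σ θ)) (μ : Θ → ℝ) (hμ : IsProb μ)
    (hobed : AmbObedient φr p ur σ μ) :
    ∑ θ, μ θ * φs (expPayoff p us (σ θ) tauStar) ≤ φs usBP := by
  set σbar : Ω → A → ℝ := fun ω a => ∑ θ, μ θ * σ θ ω a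
  have hσbar : IsKernel σbar := isKernel_weightedSum hμ hσ
  have hobedient : Obedient p ur σbar := obedient_of_card_eq_two hA fun a => by
    rw [expPayoff_constStrategy_of_isKernel p ur hσbar, expPayoff_weightedSum]
    exact hobed.le_sum_mul_of_forall_eq hφr hμ (isKernel_constStrategy a)
      fun θ => expPayoff_constStrategy_of_isKernel p ur (hσ θ) a
  calc ∑ θ, μ θ * φs (expPayoff p us (σ θ) tauStar)
      ≤ φs (∑ θ, μ θ * expPayoff p us (σ θ) tauStar) := hφs.2.1.sum_mul_le_map hμ _
    _ = φs (expPayoff p us σbar tauStar) := by rw [expPayoff_weightedSum]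
    _ ≤ φs usBP := hφs.1.monotone (husBP.2 ⟨σbar, hσbar, hobedient, rfl⟩)

/-- Corollary 1: if there are exactly two actions, no obedient ambiguous
experiment benefits the sender: `U_s(σ, μ, τ*) ≤ u_s^BP` (stated via the strictly
increasing `φs`). -/
theorem no_benefit_with_binary_actions
    {Ω A : Type*} [Fintype Ω] [Fintype A] [DecidableEq A]
    (hA : Fintype.card A = 2)
    (p : Ω → ℝ) (hp : IsProb p) (us ur : A → Ω → ℝ)
    (φs φr : ℝ → ℝ) (hφs : SmoothIndex φs) (hφr : SmoothIndex φr)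
    (usBP : ℝ)
    (husBP : IsGreatest {x : ℝ | ∃ σ0 : Ω → A → ℝ,
      IsKernel σ0 ∧ Obedient p ur σ0 ∧ x = expPayoff p us σ0 tauStar} usBP)
    (Θ : Type*) [Fintype Θ]
    (σ : Θ → Ω → A → ℝ) (hσ : ∀ θ, IsKernel (σ θ)) (μ : Θ → ℝ) (hμ : IsProb μ)
    (hobed : AmbObedient φr p ur σ μ) :
    ∑ θ, μ θ * φs (expPayoff p us (σ θ) tauStar) ≤ φs usBP :=
  no_benefit_with_binary_actions_general hA p us ur φs φr hφs hφr usBP husBP Θ σ hσ μ hμ hobed
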